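/- Let T denote the matrix with rows (1,0) and (2,1), an element of SL(2,ℤ). Let p = (a,b) and q = (c,d) be primitive vectors in ℤ² (i.e., gcd(a,b) = 1 and gcd(c,d) = 1) such that |ad − bc| = 2. Then there exist a matrix M in SL(2,ℤ) and signs ε, η ∈ {1, −1} such that M·p = (1,0) and (M⁻¹ · Tᵉ · M)·p = η·q, where Tᵉ denotes T when ε = 1 and T⁻¹ when ε = −1. -/

import Mathlib

/-!
Primitive vectors `p`, `q` with even determinant agree modulo 2, since two nonzero vectors of
`(ZMod 2)²` with zero determinant coincide. So `q = p + 2w`, and `det (p, q) = 2 det (p, w)` forces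
`det (p, w) = s = ±1`. The matrix `N` with columns `p` and `s • w` lies in `SL(2, ℤ)`; its inverse
`M` sends `p` to `(1, 0)`, and `N Tˢ N⁻¹ p = N (1, 2s) = p + 2w = q`.
-/

def Tmat : Matrix.SpecialLinearGroup (Fin 2) ℤ :=
  ⟨!![1, 0; 2, 1], by simp [Matrix.det_fin_two_of]⟩

open Matrix.SpecialLinearGroup MatrixGroups
open scoped Matrix

theorem coe_Tmat_zpow (n : ℤ) :
    ((Tmat ^ n : SL(2, ℤ)) : Matrix (Fin 2) (Fin 2) ℤ) = !![1, 0; 2 * n, 1] := by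
  induction n with
  | zero => simp [Matrix.one_fin_two]
  | succ n h =>
    rw [_root_.zpow_add_one, coe_mul, h]
    simp [Tmat, mul_add]
  | pred n h =>
    rw [_root_.zpow_sub_one, coe_mul, h, coe_inv]
    simp [Tmat, Matrix.adjugate_fin_two_of, sub_eq_add_neg, mul_add]

theorem ZMod.two_eq_and_eq_of_mul_sub_mul_eq_zero : ∀ x y z w : ZMod 2,
    ¬(x = 0 ∧ y = 0) → ¬(z = 0 ∧ w = 0) → x * w - y * z = 0 → x = z ∧ y = w := by
  decide

theorem Int.cast_zmod_two_ne_zero_of_gcd_eq_one {x y : ℤ} (h : Int.gcd x y = 1) :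
    ¬((x : ZMod 2) = 0 ∧ (y : ZMod 2) = 0) := fun ⟨hx, hy⟩ =>
  not_isCoprime_zero_zero (R := ZMod 2) <| by
    simpa [hx, hy] using (Int.isCoprime_iff_gcd_eq_one.mpr h).map (Int.castRingHom (ZMod 2))

theorem Int.two_dvd_sub_of_two_dvd_mul_sub_mul {a b c d : ℤ} (hp : Int.gcd a b = 1)
    (hq : Int.gcd c d = 1) (h : 2 ∣ a * d - b * c) : 2 ∣ c - a ∧ 2 ∣ d - b := by
  have hdet : (a : ZMod 2) * d - b * c = 0 := by
    exact_mod_cast (ZMod.intCast_zmod_eq_zero_iff_dvd _ 2).mpr h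
  obtain ⟨hac, hbd⟩ := ZMod.two_eq_and_eq_of_mul_sub_mul_eq_zero _ _ _ _
    (Int.cast_zmod_two_ne_zero_of_gcd_eq_one hp) (Int.cast_zmod_two_ne_zero_of_gcd_eq_one hq) hdet
  exact ⟨(ZMod.intCast_eq_intCast_iff_dvd_sub a c 2).mp hac,
    (ZMod.intCast_eq_intCast_iff_dvd_sub b d 2).mp hbd⟩

theorem exists_mulVec_eq_conj_Tmat_zpow {a b w₁ w₂ s : ℤ} (hs : s * s = 1)
    (hdet : a * w₂ - b * w₁ = s) :
    ∃ M : SL(2, ℤ), (M : Matrix (Fin 2) (Fin 2) ℤ) *ᵥ ![a, b] = ![1, 0] ∧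
      ((M⁻¹ * Tmat ^ s * M : SL(2, ℤ)) : Matrix (Fin 2) (Fin 2) ℤ) *ᵥ ![a, b] =
        ![a + 2 * w₁, b + 2 * w₂] := by
  let N : SL(2, ℤ) := ⟨!![a, s * w₁; b, s * w₂], by
    rw [Matrix.det_fin_two_of]; linear_combination s * hdet + hs⟩
  have hN : (N : Matrix (Fin 2) (Fin 2) ℤ) *ᵥ ![1, 0] = ![a, b] := by
    ext i; fin_cases i <;> simp [N]
  have hsw (w : ℤ) : s * w * (2 * s) = 2 * w := by linear_combination 2 * w * hs
  refine ⟨N⁻¹, ?_, ?_⟩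
  · rw [← hN, Matrix.mulVec_mulVec, ← coe_mul, inv_mul_cancel, coe_one, Matrix.one_mulVec]
  · rw [inv_inv, ← hN, Matrix.mulVec_mulVec, ← coe_mul, inv_mul_cancel_right, coe_mul,
      ← Matrix.mulVec_mulVec, coe_Tmat_zpow]
    ext i; fin_cases i <;> simp [N, Matrix.vecHead, Matrix.vecTail, hsw]

/-- If `p = (a,b)` and `q = (c,d)` are primitive vectors in `ℤ²` with
`|ad - bc| = 2`, then there are `M ∈ SL(2,ℤ)` and signs `ε, η ∈ {1, -1}` such that
`M·p = (1,0)` and `(M⁻¹ · Tᵉ · M)·p = η·q`, where `T` has rows `(1,0)` and `(2,1)`. -/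
theorem stmt_3 (a b c d : ℤ) (hp : Int.gcd a b = 1) (hq : Int.gcd c d = 1)
    (h : |a * d - b * c| = 2) :
    ∃ (M : Matrix.SpecialLinearGroup (Fin 2) ℤ) (ε η : ℤ),
      (ε = 1 ∨ ε = -1) ∧ (η = 1 ∨ η = -1) ∧
      (M : Matrix (Fin 2) (Fin 2) ℤ).mulVec ![a, b] = ![1, 0] ∧
      ((M⁻¹ * Tmat ^ ε * M : Matrix.SpecialLinearGroup (Fin 2) ℤ) :
          Matrix (Fin 2) (Fin 2) ℤ).mulVec ![a, b] = η • ![c, d] := by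
  obtain ⟨⟨w₁, hw₁⟩, ⟨w₂, hw₂⟩⟩ :=
    Int.two_dvd_sub_of_two_dvd_mul_sub_mul hp hq ((dvd_abs _ _).mp (h ▸ dvd_rfl))
  obtain rfl : c = a + 2 * w₁ := by linarith
  obtain rfl : d = b + 2 * w₂ := by linarith
  have hdet : |a * w₂ - b * w₁| = 1 := by
    rw [show a * (b + 2 * w₂) - b * (a + 2 * w₁) = 2 * (a * w₂ - b * w₁) by ring, abs_mul,
      abs_two] at h
    linarith
  obtain ⟨M, hM, hconj⟩ := exists_mulVec_eq_conj_Tmat_zpow (s := a * w₂ - b * w₁)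
    (by rw [← abs_mul_abs_self, hdet, one_mul]) rfl
  exact ⟨M, _, 1, abs_eq zero_le_one |>.mp hdet, Or.inl rfl, hM, by rw [hconj, one_smul]⟩
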